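/- arXiv:1705.03855 — 3 statements merged into one kernel-verified Lean document; each statement's English description precedes it below -/
import Mathlib

section
/- Let R be a commutative ring, I a nilpotent ideal of R (I^n = 0 for some n ≥ 1), and G a group. If x ∈ MonoidAlgebra R G is such that the coefficient x(1) at the identity element is a unit of R and x(g) ∈ I for every g ≠ 1, then x is a unit of MonoidAlgebra R G. -/
/-!
Write `x = u + y` with `u = x(1)` viewed as a scalar of `R[G]` and `y = x - u`. All coefficients
of `y` lie in `I`, so by the convolution formula all coefficients of `y ^ k` lie in `I ^ k`;
hence `y ^ n = 0`. A unit plus a nilpotent commuting with it is a unit, and scalars are central.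
-/

namespace MonoidAlgebra

variable {R M : Type*}

theorem coeff_pow_mem_pow [CommSemiring R] [Monoid M] {I : Ideal R} {y : MonoidAlgebra R M}
    (hy : ∀ m, y.coeff m ∈ I) (k : ℕ) (m : M) : (y ^ k).coeff m ∈ I ^ k := by
  classical
  induction k generalizing m with
  | zero => simp [Ideal.one_eq_top]
  | succ k ih =>
    rw [pow_succ y, coeff_mul, pow_succ I]
    refine Ideal.sum_mem _ fun m₁ _ => Ideal.sum_mem _ fun m₂ _ => ?_
    dsimp only
    split_ifs
    · exact Ideal.mul_mem_mul (ih m₁) (hy m₂)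
    · exact zero_mem _

theorem isNilpotent_of_coeff_mem [CommSemiring R] [Monoid M] {I : Ideal R} (hI : IsNilpotent I)
    {y : MonoidAlgebra R M} (hy : ∀ m, y.coeff m ∈ I) : IsNilpotent y := by
  obtain ⟨n, hn⟩ := hI
  refine ⟨n, coeff_injective <| Finsupp.ext fun m => ?_⟩
  simpa [hn] using coeff_pow_mem_pow hy n m

theorem isUnit_of_isUnit_coeff_one_of_coeff_mem [CommRing R] [Monoid M] {I : Ideal R}
    (hI : IsNilpotent I) {x : MonoidAlgebra R M} (hx₁ : IsUnit (x.coeff 1))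
    (hx : ∀ m ≠ 1, x.coeff m ∈ I) : IsUnit x := by
  classical
  set u := algebraMap R (MonoidAlgebra R M) (x.coeff 1)
  have hy : ∀ m, (x - u).coeff m ∈ I := by
    intro m
    by_cases hm : m = 1
    · simp [u, hm, coe_algebraMap, coeff_sub]
    · simpa [u, coe_algebraMap, coeff_sub, Finsupp.single_apply, Ne.symm hm] using hx m hm
  have hxu : x = x - u + u := (sub_add_cancel x u).symm
  rw [hxu]
  exact (isNilpotent_of_coeff_mem hI hy).isUnit_add_right_of_commute (hx₁.map _)
    (Algebra.commute_algebraMap_right _ _)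

end MonoidAlgebra

theorem statement1_general (R : Type*) [CommRing R] (G : Type*) [Group G]
    (I : Ideal R) (n : ℕ) (hI : I ^ n = ⊥)
    (x : MonoidAlgebra R G)
    (hx1 : IsUnit (x.coeff 1))
    (hxg : ∀ g : G, g ≠ 1 → x.coeff g ∈ I) :
    IsUnit x :=
  MonoidAlgebra.isUnit_of_isUnit_coeff_one_of_coeff_mem ⟨n, hI⟩ hx1 hxg

/-- Let `R` be a commutative ring, `I` a nilpotent ideal of `R`
(`I ^ n = 0` with `n ≥ 1`), and `G` a group.  If `x : MonoidAlgebra R G` has a unit of `R`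
as its coefficient at the identity element, and all of its other coefficients lie in `I`,
then `x` is a unit of the group algebra `MonoidAlgebra R G`. -/
theorem statement1 (R : Type*) [CommRing R] (G : Type*) [Group G]
    (I : Ideal R) (n : ℕ) (hn : 1 ≤ n) (hI : I ^ n = ⊥)
    (x : MonoidAlgebra R G)
    (hx1 : IsUnit (x.coeff 1))
    (hxg : ∀ g : G, g ≠ 1 → x.coeff g ∈ I) :
    IsUnit x :=
  statement1_general R G I n hI x hx1 hxg
end

section
/- Let N be a category carrying two model structures M₁ and M₂ which have the same class of cofibrations, and suppose that every M₂-weak equivalence between M₂-fibrant objects is an M₁-weak equivalence. Then every morphism g : X → Y which is an M₁-fibration and whose source X and target Y are M₂-fibrant is an M₂-fibration. -/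
open CategoryTheory Limits

universe v u

/-- `f` is a retract of `g` in the arrow category: there are morphisms
`i : f → g` and `r : g → f` of arrows with `r ∘ i = id f`. -/
def IsRetractArrow {N : Type u} [Category.{v} N] {X Y X' Y' : N}
    (f : X ⟶ Y) (g : X' ⟶ Y') : Prop :=
  ∃ (i₀ : X ⟶ X') (i₁ : Y ⟶ Y') (r₀ : X' ⟶ X) (r₁ : Y' ⟶ Y),
    i₀ ≫ r₀ = 𝟙 X ∧ i₁ ≫ r₁ = 𝟙 Y ∧ i₀ ≫ g = f ≫ i₁ ∧ r₀ ≫ f = g ≫ r₁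

/-- A (Quillen) model structure on a category `N`: three classes of morphisms
(weak equivalences `W`, cofibrations `Cof`, fibrations `Fib`) satisfying two-out-of-three,
closure under retracts, the lifting axioms and the factorization axioms. -/
structure ModelStructure (N : Type u) [Category.{v} N] where
  W : MorphismProperty N
  Cof : MorphismProperty N
  Fib : MorphismProperty N
  weq_comp : ∀ {X Y Z : N} (f : X ⟶ Y) (g : Y ⟶ Z), W f → W g → W (f ≫ g)
  weq_cancel_left : ∀ {X Y Z : N} (f : X ⟶ Y) (g : Y ⟶ Z), W f → W (f ≫ g) → W g
  weq_cancel_right : ∀ {X Y Z : N} (f : X ⟶ Y) (g : Y ⟶ Z), W g → W (f ≫ g) → W f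
  weq_retract : ∀ {X Y X' Y' : N} (f : X ⟶ Y) (g : X' ⟶ Y'),
    IsRetractArrow f g → W g → W f
  cof_retract : ∀ {X Y X' Y' : N} (f : X ⟶ Y) (g : X' ⟶ Y'),
    IsRetractArrow f g → Cof g → Cof f
  fib_retract : ∀ {X Y X' Y' : N} (f : X ⟶ Y) (g : X' ⟶ Y'),
    IsRetractArrow f g → Fib g → Fib f
  lift_cof_trivFib : ∀ {A B X Y : N} (i : A ⟶ B) (p : X ⟶ Y),
    Cof i → Fib p → W p → HasLiftingProperty i p
  lift_trivCof_fib : ∀ {A B X Y : N} (i : A ⟶ B) (p : X ⟶ Y),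
    Cof i → W i → Fib p → HasLiftingProperty i p
  factor_trivCof_fib : ∀ {X Y : N} (f : X ⟶ Y),
    ∃ (Z : N) (i : X ⟶ Z) (p : Z ⟶ Y), Cof i ∧ W i ∧ Fib p ∧ i ≫ p = f
  factor_cof_trivFib : ∀ {X Y : N} (f : X ⟶ Y),
    ∃ (Z : N) (i : X ⟶ Z) (p : Z ⟶ Y), Cof i ∧ Fib p ∧ W p ∧ i ≫ p = f

/-- An object is fibrant (for a given model structure) if the unique morphism to the
terminal object is a fibration. -/
def ModelStructure.Fibrant {N : Type u} [Category.{v} N] [HasTerminal N]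
    (S : ModelStructure N) (X : N) : Prop :=
  S.Fib (terminal.from X)

/-- Fibrations are closed under composition (retract argument). -/
theorem ModelStructure.fib_comp {N : Type u} [Category.{v} N] (S : ModelStructure N)
    {X Y Z : N} (p : X ⟶ Y) (q : Y ⟶ Z) (hp : S.Fib p) (hq : S.Fib q) :
    S.Fib (p ≫ q) := by
  obtain ⟨W, i, r, hi_cof, hi_weq, hr_fib, hir⟩ := S.factor_trivCof_fib (p ≫ q)
  have h1 : HasLiftingProperty i p := S.lift_trivCof_fib i p hi_cof hi_weq hp
  have h2 : HasLiftingProperty i q := S.lift_trivCof_fib i q hi_cof hi_weq hq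
  have h : HasLiftingProperty i (p ≫ q) := inferInstance
  have sq : 𝟙 X ≫ p ≫ q = i ≫ r := by rw [hir]; simp
  obtain ⟨⟨⟨l, hl1, hl2⟩⟩⟩ := (h.sq_hasLift (CommSq.mk sq))
  exact S.fib_retract (p ≫ q) r
    ⟨i, 𝟙 Z, l, 𝟙 Z, hl1, by simp, by simp [hir], by simp [hl2]⟩ hr_fib

/-- Let `N` carry two model structures `M₁`, `M₂` with the same
cofibrations, such that every `M₂`-weak equivalence between `M₂`-fibrant objects is an
`M₁`-weak equivalence.  Then every `M₁`-fibration with `M₂`-fibrant source and target is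
an `M₂`-fibration. -/
theorem statement6 {N : Type u} [Category.{v} N] [HasTerminal N]
    (M₁ M₂ : ModelStructure N)
    (hcof : M₁.Cof = M₂.Cof)
    (hweq : ∀ {X Y : N} (f : X ⟶ Y),
      M₂.Fibrant X → M₂.Fibrant Y → M₂.W f → M₁.W f)
    {X Y : N} (g : X ⟶ Y)
    (hg : M₁.Fib g) (hX : M₂.Fibrant X) (hY : M₂.Fibrant Y) :
    M₂.Fib g := by
  obtain ⟨Z, i, p, hi_cof, hi_weq, hp_fib, hip⟩ := M₂.factor_trivCof_fib g
  have hZ : M₂.Fibrant Z := by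
    have : M₂.Fib (p ≫ terminal.from Y) := M₂.fib_comp p (terminal.from Y) hp_fib hY
    simpa [ModelStructure.Fibrant, terminal.comp_from] using this
  have hi_weq1 : M₁.W i := hweq i hX hZ hi_weq
  have hi_cof1 : M₁.Cof i := by rw [hcof]; exact hi_cof
  have h : HasLiftingProperty i g := M₁.lift_trivCof_fib i g hi_cof1 hi_weq1 hg
  have sq : 𝟙 X ≫ g = i ≫ p := by rw [hip]; simp
  obtain ⟨⟨⟨l, hl1, hl2⟩⟩⟩ := (h.sq_hasLift (CommSq.mk sq))
  exact M₂.fib_retract g p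
    ⟨i, 𝟙 Y, l, 𝟙 Y, hl1, by simp, by simp [hip], by simp [hl2]⟩ hp_fib
end

section
/- Let 𝓜 be a model category and let N be a category carrying two model structures M₁ and M₂ such that: they have the same class of cofibrations; every M₁-weak equivalence is an M₂-weak equivalence; and every M₂-weak equivalence between M₂-fibrant objects is an M₁-weak equivalence. Let G : 𝓜 → N be a functor admitting a left adjoint F : N → 𝓜, and suppose G is right Quillen with respect to M₁ (i.e., G sends fibrations of 𝓜 to M₁-fibrations and trivial fibrations of 𝓜 to M₁-trivial fibrations). Then G is right Quillen with respect to M₂ (i.e., G sends fibrations of 𝓜 to M₂-fibrations and trivial fibrations of 𝓜 to M₂-trivial fibrations) if and only if G sends every fibrant object of 𝓜 to an M₂-fibrant object of N. -/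
/-!
Since `M₁` and `M₂` have the same cofibrations, they have the same trivial fibrations, so only
the preservation of fibrations is at stake. Fibrant objects go to fibrant objects because a
right adjoint preserves the terminal object. Conversely, `G.map f` is an `M₂`-fibration as soon
as `F` sends `M₂`-trivial cofibrations `i` to trivial cofibrations. `F i` is a cofibration by
adjunction. It lifts against every fibration `p` between fibrant objects, because `G p` is an
`M₁`-fibration between `M₂`-fibrant objects, hence an `M₂`-fibration (retract argument, using
that `M₂`-weak equivalences between `M₂`-fibrant objects are `M₁`-weak equivalences). A map
with this lifting property is a weak equivalence: lifting it against a fibrant replacement of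
itself produces a fibration with a section that is fibrewise homotopic to the identity, hence a
trivial fibration, and two-out-of-three concludes.
-/

open CategoryTheory Limits

universe v u v' u'

open MorphismProperty

theorem IsRetractArrow.of_retractArrow {C : Type u} [Category.{v} C] {X Y X' Y' : C}
    {f : X ⟶ Y} {g : X' ⟶ Y'} (h : RetractArrow f g) : IsRetractArrow f g :=
  ⟨h.i.left, h.i.right, h.r.left, h.r.right, Arrow.hom.congr_left h.retract,
    Arrow.hom.congr_right h.retract, h.i.w, h.r.w⟩

namespace CategoryTheory.Adjunction

variable {C : Type u} [Category.{v} C] {D : Type u'} [Category.{v'} D] {F : C ⥤ D} {G : D ⥤ C}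
  {T : MorphismProperty C} {T' : MorphismProperty D}

theorem map_mem_llp (adj : F ⊣ G) (h : ∀ {X Y : D} (p : X ⟶ Y), T' p → T (G.map p))
    {A B : C} {i : A ⟶ B} (hi : T.llp i) : T'.llp (F.map i) := fun _ _ p hp =>
  (adj.hasLiftingProperty_iff i p).2 (hi _ (h p hp))

theorem map_mem_rlp (adj : F ⊣ G) (h : ∀ {A B : C} (i : A ⟶ B), T i → T' (F.map i))
    {X Y : D} {p : X ⟶ Y} (hp : T'.rlp p) : T.rlp (G.map p) := fun _ _ i hi =>
  (adj.hasLiftingProperty_iff i p).1 (hp _ (h i hi))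

end CategoryTheory.Adjunction

theorem hasLiftingProperty_of_section_of_homotopy {C : Type u} [Category.{v} C]
    {E B P U V : C} {q : E ⟶ B} {s : B ⟶ E} (hs : s ≫ q = 𝟙 B) {d₀ d₁ : P ⟶ E}
    (hd : d₀ ≫ q = d₁ ≫ q) {H : E ⟶ P} (hH₀ : H ≫ d₀ = q ≫ s) (hH₁ : H ≫ d₁ = 𝟙 E)
    (c : U ⟶ V) [HasLiftingProperty c d₀] : HasLiftingProperty c q where
  sq_hasLift {u v} sq := by
    have sq' : CommSq (u ≫ H) c d₀ (v ≫ s) :=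
      ⟨by rw [Category.assoc, hH₀, reassoc_of% sq.w]⟩
    exact ⟨⟨{ l := sq'.lift ≫ d₁
              fac_left := by rw [sq'.fac_left_assoc, Category.assoc, hH₁, Category.comp_id]
              fac_right := by
                rw [Category.assoc, ← hd, sq'.fac_right_assoc, Category.assoc, hs,
                  Category.comp_id] }⟩⟩

namespace ModelStructure

section

variable {N : Type u} [Category.{v} N] (S : ModelStructure N)

def trivCof : MorphismProperty N := S.Cof ⊓ S.W

def trivFib : MorphismProperty N := S.Fib ⊓ S.W

instance : S.W.IsStableUnderRetracts :=
  ⟨fun h => S.weq_retract _ _ (.of_retractArrow h)⟩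

instance : S.Cof.IsStableUnderRetracts :=
  ⟨fun h => S.cof_retract _ _ (.of_retractArrow h)⟩

instance : S.Fib.IsStableUnderRetracts :=
  ⟨fun h => S.fib_retract _ _ (.of_retractArrow h)⟩

instance : S.trivFib.IsStableUnderRetracts := by
  unfold trivFib; infer_instance

instance : HasFactorization S.trivCof S.Fib where
  nonempty_mapFactorizationData f := by
    obtain ⟨Z, i, p, hi, hw, hp, fac⟩ := S.factor_trivCof_fib f
    exact ⟨{ Z, i, p, fac, hi := ⟨hi, hw⟩, hp }⟩

instance : HasFactorization S.Cof S.trivFib where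
  nonempty_mapFactorizationData f := by
    obtain ⟨Z, i, p, hi, hp, hw, fac⟩ := S.factor_cof_trivFib f
    exact ⟨{ Z, i, p, fac, hi, hp := ⟨hp, hw⟩ }⟩

theorem rlp_trivCof : S.trivCof.rlp = S.Fib :=
  rlp_eq_of_le_rlp_of_hasFactorization_of_isStableUnderRetracts
    fun _ _ p hp _ _ i hi => S.lift_trivCof_fib i p hi.1 hi.2 hp

theorem rlp_cof : S.Cof.rlp = S.trivFib :=
  rlp_eq_of_le_rlp_of_hasFactorization_of_isStableUnderRetracts
    fun _ _ p hp _ _ i hi => S.lift_cof_trivFib i p hi hp.1 hp.2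

theorem llp_trivFib : S.trivFib.llp = S.Cof :=
  llp_eq_of_le_llp_of_hasFactorization_of_isStableUnderRetracts
    fun _ _ i hi _ _ p hp => S.lift_cof_trivFib i p hi hp.1 hp.2

instance : S.Fib.IsMultiplicative := S.rlp_trivCof ▸ inferInstance

instance : S.Fib.IsStableUnderBaseChange := S.rlp_trivCof ▸ inferInstance

theorem trivFib_of_isIso {X Y : N} (f : X ⟶ Y) [IsIso f] : S.trivFib f :=
  S.rlp_cof ▸ rlp_of_isIso _ f

/-- Factoring the diagonal of `q` yields a path object for `E` over `B`; lifting `r` against it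
makes `q ≫ s` fibrewise homotopic to `𝟙 E`, which lets `q` lift against every cofibration. -/
theorem trivFib_of_section {C E B : N} {q : E ⟶ B} [HasPullback q q] (hq : S.Fib q)
    {s : B ⟶ E} (hs : s ≫ q = 𝟙 B) {r : C ⟶ E} (hr : S.trivCof r) (hrs : r ≫ q ≫ s = r) :
    S.trivFib q := by
  obtain ⟨P, σ, π, -, hσ, hπ, hσπ⟩ := S.factor_trivCof_fib (pullback.diagonal q)
  have hd₀ : S.trivFib (π ≫ pullback.fst q q) :=
    ⟨S.Fib.comp_mem _ _ hπ (S.Fib.of_isPullback (IsPullback.of_hasPullback q q).flip hq),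
      S.weq_cancel_left σ _ hσ <| by
        simpa [reassoc_of% hσπ] using (S.trivFib_of_isIso (𝟙 E)).2⟩
  have := S.lift_trivCof_fib r π hr.1 hr.2 hπ
  have sq : CommSq (r ≫ σ) r π (pullback.lift (q ≫ s) (𝟙 E) (by simp [hs])) :=
    ⟨by ext <;> simp only [Category.assoc, reassoc_of% hσπ, pullback.diagonal_fst,
      pullback.diagonal_snd, pullback.lift_fst, pullback.lift_snd, hrs, Category.comp_id]⟩
  rw [← rlp_cof]
  intro U V c hc
  have := S.lift_cof_trivFib c _ hc hd₀.1 hd₀.2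
  exact hasLiftingProperty_of_section_of_homotopy (d₀ := π ≫ pullback.fst q q)
    (d₁ := π ≫ pullback.snd q q) (H := sq.lift) hs
    (by simp only [Category.assoc, pullback.condition])
    (by rw [sq.fac_right_assoc, pullback.lift_fst])
    (by rw [sq.fac_right_assoc, pullback.lift_snd]) c

variable [HasTerminal N]

theorem fibrant_of_fib {X Y : N} {p : X ⟶ Y} (hp : S.Fib p) (hY : S.Fibrant Y) :
    S.Fibrant X := by
  rw [Fibrant, ← terminal.comp_from p]
  exact S.Fib.comp_mem _ _ hp hY

theorem fibrant_of_isTerminal {X : N} (hX : IsTerminal X) : S.Fibrant X :=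
  have := isIso_of_isTerminal hX terminalIsTerminal (terminal.from X)
  (S.trivFib_of_isIso _).1

theorem weq_of_llp_fib_of_fibrant [HasPullbacks N] {C D : N} {j : C ⟶ D}
    (hlift : ∀ {X Y : N} (p : X ⟶ Y), S.Fib p → S.Fibrant X → S.Fibrant Y →
      HasLiftingProperty j p) :
    S.W j := by
  obtain ⟨D', rD, t, hrD, hrDW, hD', -⟩ := S.factor_trivCof_fib (terminal.from D)
  obtain rfl : t = terminal.from D' := Subsingleton.elim _ _
  obtain ⟨C', rC, q, hrC, hrCW, hq, fac⟩ := S.factor_trivCof_fib (j ≫ rD)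
  have := hlift q hq (S.fibrant_of_fib hq hD') hD'
  have sqt : CommSq rC j q rD := ⟨fac⟩
  have := S.lift_trivCof_fib rD q hrD hrDW hq
  have sqs : CommSq sqt.lift rD q (𝟙 D') := ⟨by simp⟩
  have hqW : S.W q := (S.trivFib_of_section hq sqs.fac_right ⟨hrC, hrCW⟩
    (by rw [reassoc_of% fac, sqs.fac_left, sqt.fac_left])).2
  have htW : S.W sqt.lift := S.weq_cancel_right _ q hqW (by rwa [sqt.fac_right])
  exact S.weq_cancel_right j _ htW (by rwa [sqt.fac_left])

end

section

variable {N : Type u'} [Category.{v'} N] {M₁ M₂ : ModelStructure N}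

theorem trivFib_eq_of_cof_eq (hcof : M₁.Cof = M₂.Cof) : M₁.trivFib = M₂.trivFib := by
  rw [← rlp_cof, hcof, rlp_cof]

theorem fib_of_fib_of_fibrant [HasTerminal N] (hcof : M₁.Cof = M₂.Cof)
    (hW21 : ∀ {X Y : N} (f : X ⟶ Y), M₂.Fibrant X → M₂.Fibrant Y → M₂.W f → M₁.W f)
    {X Y : N} {p : X ⟶ Y} (hp : M₁.Fib p) (hX : M₂.Fibrant X) (hY : M₂.Fibrant Y) :
    M₂.Fib p := by
  obtain ⟨E, j, q, hj, hjW, hq, fac⟩ := M₂.factor_trivCof_fib p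
  have := M₁.lift_trivCof_fib j p (hcof ▸ hj) (hW21 j hX (M₂.fibrant_of_fib hq hY) hjW) hp
  exact M₂.fib_retract p q (.of_retractArrow (.ofRightLiftingProperty fac)) hq

end

end ModelStructure

open ModelStructure

theorem statement7_general {𝓜 : Type u} [Category.{v} 𝓜] [HasTerminal 𝓜]
    [HasFiniteLimits 𝓜]
    {N : Type u'} [Category.{v'} N] [HasTerminal N]
    (SM : ModelStructure 𝓜) (M₁ M₂ : ModelStructure N)
    (hcof : M₁.Cof = M₂.Cof)
    (hW21 : ∀ {X Y : N} (f : X ⟶ Y),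
      M₂.Fibrant X → M₂.Fibrant Y → M₂.W f → M₁.W f)
    (G : 𝓜 ⥤ N) (F : N ⥤ 𝓜) (adj : F ⊣ G)
    (hGfib : ∀ {X Y : 𝓜} (f : X ⟶ Y), SM.Fib f → M₁.Fib (G.map f))
    (hGtrivfib : ∀ {X Y : 𝓜} (f : X ⟶ Y),
      SM.Fib f → SM.W f → M₁.Fib (G.map f) ∧ M₁.W (G.map f)) :
    ((∀ {X Y : 𝓜} (f : X ⟶ Y), SM.Fib f → M₂.Fib (G.map f)) ∧
      (∀ {X Y : 𝓜} (f : X ⟶ Y),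
        SM.Fib f → SM.W f → M₂.Fib (G.map f) ∧ M₂.W (G.map f)))
    ↔ (∀ X : 𝓜, SM.Fibrant X → M₂.Fibrant (G.obj X)) := by
  have := adj.rightAdjoint_preservesLimits
  refine ⟨fun ⟨hfib, _⟩ X hX => ?_, fun hfibrant => ?_⟩
  · exact M₂.fibrant_of_fib (hfib _ hX)
      (M₂.fibrant_of_isTerminal (terminalIsTerminal.isTerminalObj G _))
  have hGtrivfib₂ {X Y : 𝓜} (f : X ⟶ Y) (hf : SM.trivFib f) : M₂.trivFib (G.map f) :=
    trivFib_eq_of_cof_eq hcof ▸ hGtrivfib f hf.1 hf.2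
  have hFcof {A B : N} (i : A ⟶ B) (hi : M₂.Cof i) : SM.Cof (F.map i) := by
    rw [← llp_trivFib] at hi ⊢
    exact adj.map_mem_llp hGtrivfib₂ hi
  have hFtrivCof {A B : N} (i : A ⟶ B) (hi : M₂.trivCof i) : SM.trivCof (F.map i) :=
    ⟨hFcof i hi.1, SM.weq_of_llp_fib_of_fibrant fun p hp hX hY =>
      (adj.hasLiftingProperty_iff i p).2 <| M₂.lift_trivCof_fib i _ hi.1 hi.2 <|
        fib_of_fib_of_fibrant hcof hW21 (hGfib p hp) (hfibrant _ hX) (hfibrant _ hY)⟩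
  refine ⟨fun f hf => ?_, fun f hf hw => hGtrivfib₂ f ⟨hf, hw⟩⟩
  rw [← rlp_trivCof] at hf ⊢
  exact adj.map_mem_rlp hFtrivCof hf

/-- Let `𝓜` be a model category (a bicomplete-enough category with a
model structure `SM`) and let `N` carry two model structures `M₁`, `M₂` with the same
cofibrations, such that every `M₁`-weak equivalence is an `M₂`-weak equivalence and every
`M₂`-weak equivalence between `M₂`-fibrant objects is an `M₁`-weak equivalence.  Let
`G : 𝓜 ⥤ N` be a functor with a left adjoint `F`, and suppose `G` is right Quillen with
respect to `M₁`.  Then `G` is right Quillen with respect to `M₂` if and only if `G` sends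
every fibrant object of `𝓜` to an `M₂`-fibrant object of `N`. -/
theorem statement7 {𝓜 : Type u} [Category.{v} 𝓜] [HasTerminal 𝓜]
    [HasFiniteLimits 𝓜] [HasFiniteColimits 𝓜]
    {N : Type u'} [Category.{v'} N] [HasTerminal N]
    (SM : ModelStructure 𝓜) (M₁ M₂ : ModelStructure N)
    (hcof : M₁.Cof = M₂.Cof)
    (hW12 : ∀ {X Y : N} (f : X ⟶ Y), M₁.W f → M₂.W f)
    (hW21 : ∀ {X Y : N} (f : X ⟶ Y),
      M₂.Fibrant X → M₂.Fibrant Y → M₂.W f → M₁.W f)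
    (G : 𝓜 ⥤ N) (F : N ⥤ 𝓜) (adj : F ⊣ G)
    (hGfib : ∀ {X Y : 𝓜} (f : X ⟶ Y), SM.Fib f → M₁.Fib (G.map f))
    (hGtrivfib : ∀ {X Y : 𝓜} (f : X ⟶ Y),
      SM.Fib f → SM.W f → M₁.Fib (G.map f) ∧ M₁.W (G.map f)) :
    ((∀ {X Y : 𝓜} (f : X ⟶ Y), SM.Fib f → M₂.Fib (G.map f)) ∧
      (∀ {X Y : 𝓜} (f : X ⟶ Y),
        SM.Fib f → SM.W f → M₂.Fib (G.map f) ∧ M₂.W (G.map f)))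
    ↔ (∀ X : 𝓜, SM.Fibrant X → M₂.Fibrant (G.obj X)) :=
  statement7_general SM M₁ M₂ hcof hW21 G F adj hGfib hGtrivfib
end
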